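/- The constant function 1 is a positive bounded supersolution of (L, B) (indeed L1 = 0 on (1,∞) and B1 = 0), so the generalized principal eigenvalue satisfies λ₁ ≥ 0. Nevertheless, for every ε ∈ (0,1) the function v(x) = 1 - ε - 1/x is a bounded C² subsolution (Lv = 0 ≤ 0 on (1,∞) and -v'(1) = -1 ≤ 0) with v(1) = -ε < 0 and v(x) > 0 for all sufficiently large x. Consequently the Critical Maximum Principle fails for (L, B): for every function φ : [1,∞) → ℝ with φ > 0, the subsolution v has finite supremum, is not nonpositive, and is not a constant multiple of φ. -/

import Mathlib

/-- The operator `L u = -u'' - (2/x) u'` on `(1,∞)`. -/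
noncomputable def LopEx (u : ℝ → ℝ) (x : ℝ) : ℝ :=
  -(deriv (deriv u) x) - (2 / x) * deriv u x

/-- The generalized principal eigenvalue of `L u = -u'' - (2/x) u'` on `(1,∞)` with
Neumann boundary operator `B u = -u'(1)`. -/
noncomputable def lambda1Ex : ℝ :=
  sSup {l : ℝ | ∃ φ : ℝ → ℝ, ContDiffOn ℝ 2 φ (Set.Ici 1) ∧
    (∀ x : ℝ, 1 ≤ x → 0 < φ x) ∧
    (∀ x : ℝ, 1 < x → l * φ x ≤ LopEx φ x) ∧
    0 ≤ -(derivWithin φ (Set.Ici 1) 1)}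

/-!
The constant `1` is a positive supersolution, which gives `λ₁ ≥ 0`. On the other hand
`c - 1/x` solves `Lu = 0` (it is the radial fundamental solution in `ℝ³`), has Neumann datum
`-u'(1) = -1 < 0`, and for `0 < c < 1` it changes sign on `[1,∞)`: negative at `1`, positive
near infinity. A function that changes sign cannot be a multiple of a positive function.
-/

open Filter Set

lemma LopEx_const (c x : ℝ) : LopEx (fun _ => c) x = 0 := by
  simp [LopEx]

theorem zero_le_lambda1Ex : 0 ≤ lambda1Ex := by
  refine Real.sSup_nonneg' ⟨0, ⟨fun _ => 1, contDiffOn_const, fun _ _ => one_pos, ?_, ?_⟩, le_rfl⟩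
  · intro x _
    rw [LopEx_const, zero_mul]
  · simp

section FundamentalSolution

variable (c : ℝ) {x : ℝ}

lemma hasDerivAt_const_sub_one_div (hx : x ≠ 0) :
    HasDerivAt (fun y => c - 1 / y) (x ^ 2)⁻¹ x := by
  simpa [one_div] using (hasDerivAt_inv hx).const_sub c

lemma deriv_const_sub_one_div_eventuallyEq (hx : x ≠ 0) :
    deriv (fun y => c - 1 / y) =ᶠ[nhds x] fun y => (y ^ 2)⁻¹ := by
  filter_upwards [eventually_ne_nhds hx] with y hy using
    (hasDerivAt_const_sub_one_div c hy).deriv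

lemma LopEx_const_sub_one_div (hx : x ≠ 0) : LopEx (fun y => c - 1 / y) x = 0 := by
  have hsecond : HasDerivAt (fun y : ℝ => (y ^ 2)⁻¹) (-(2 * x) / (x ^ 2) ^ 2) x := by
    simpa using (hasDerivAt_pow 2 x).fun_inv (pow_ne_zero 2 hx)
  rw [LopEx, (deriv_const_sub_one_div_eventuallyEq c hx).deriv_eq, hsecond.deriv,
    (hasDerivAt_const_sub_one_div c hx).deriv]
  field_simp
  ring

lemma derivWithin_const_sub_one_div_Ici_one :
    derivWithin (fun y => c - 1 / y) (Ici 1) 1 = 1 := by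
  simpa using (hasDerivAt_const_sub_one_div c one_ne_zero).hasDerivWithinAt.derivWithin
    (uniqueDiffOn_Ici 1 1 self_mem_Ici)

lemma contDiffOn_const_sub_one_div_Ici {a : ℝ} (ha : 0 < a) {n : WithTop ℕ∞} :
    ContDiffOn ℝ n (fun y => c - 1 / y) (Ici a) :=
  contDiffOn_const.sub <| contDiffOn_const.div contDiffOn_id fun _ hy => (ha.trans_le hy).ne'

lemma bddAbove_image_const_sub_one_div_Ici {a : ℝ} (ha : 0 < a) :
    BddAbove ((fun y => c - 1 / y) '' Ici a) := by
  refine ⟨c, ?_⟩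
  rintro _ ⟨y, hy, rfl⟩
  have : 0 < 1 / y := one_div_pos.2 (ha.trans_le hy)
  linarith

lemma eventually_pos_const_sub_one_div {c : ℝ} (hc : 0 < c) :
    ∀ᶠ y in atTop, 0 < c - 1 / y := by
  have hlim : Tendsto (fun y : ℝ => c - 1 / y) atTop (nhds c) := by
    simpa using (tendsto_const_nhds (x := (1 : ℝ))).div_atTop tendsto_id |>.const_sub c
  exact hlim.eventually (lt_mem_nhds hc)

end FundamentalSolution

lemma not_exists_eq_mul_of_sign_change {α : Type*} {s : Set α} {v φ : α → ℝ}
    (hφ : ∀ x ∈ s, 0 < φ x) {a b : α} (ha : a ∈ s) (hb : b ∈ s) (hva : v a < 0)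
    (hvb : 0 < v b) : ¬∃ t : ℝ, ∀ x ∈ s, v x = t * φ x := by
  rintro ⟨t, ht⟩
  have ht_neg : t < 0 := neg_of_mul_neg_left (ht a ha ▸ hva) (hφ a ha).le
  have ht_pos : 0 < t := pos_of_mul_pos_left (ht b hb ▸ hvb) (hφ b hb).le
  exact ht_neg.not_gt ht_pos

/-- The constant `1` is a supersolution, so `λ₁ ≥ 0`; nevertheless, for every
`ε ∈ (0,1)` the function `v(x) = 1 - ε - 1/x` is a bounded subsolution with `v(1) < 0`
and `v > 0` for large `x`, hence is neither nonpositive nor a constant multiple of any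
positive function: the Critical Maximum Principle fails for `(L, B)`. -/
theorem critical_maximum_principle_fails_example :
    0 ≤ lambda1Ex ∧
      ∀ ε ∈ Set.Ioo (0 : ℝ) 1, ∀ v : ℝ → ℝ, (∀ x, v x = 1 - ε - 1 / x) →
        ContDiffOn ℝ 2 v (Set.Ici 1) ∧
        (∀ x : ℝ, 1 < x → LopEx v x ≤ 0) ∧
        -(derivWithin v (Set.Ici 1) 1) ≤ 0 ∧
        BddAbove (v '' Set.Ici 1) ∧
        v 1 < 0 ∧
        (∃ X : ℝ, ∀ x : ℝ, X ≤ x → 0 < v x) ∧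
        ¬(∀ x : ℝ, 1 ≤ x → v x ≤ 0) ∧
        ∀ φ : ℝ → ℝ, (∀ x : ℝ, 1 ≤ x → 0 < φ x) →
          ¬∃ t : ℝ, ∀ x : ℝ, 1 ≤ x → v x = t * φ x := by
  refine ⟨zero_le_lambda1Ex, ?_⟩
  rintro ε ⟨hε0, hε1⟩ v hv
  obtain rfl : v = fun x => 1 - ε - 1 / x := funext hv
  have hpos := eventually_pos_const_sub_one_div (sub_pos.2 hε1)
  obtain ⟨X, hvX, hX⟩ := (hpos.and (eventually_ge_atTop 1)).exists
  have hv1 : 1 - ε - 1 / 1 < 0 := by linarith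
  refine ⟨contDiffOn_const_sub_one_div_Ici _ one_pos,
    fun x hx => (LopEx_const_sub_one_div _ (zero_lt_one.trans hx).ne').le, ?_,
    bddAbove_image_const_sub_one_div_Ici _ one_pos, hv1, eventually_atTop.1 hpos,
    fun h => (h X hX).not_gt hvX,
    fun φ hφ => not_exists_eq_mul_of_sign_change hφ self_mem_Ici hX hv1 hvX⟩
  rw [derivWithin_const_sub_one_div_Ici_one]
  norm_num
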